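/- arXiv:2603.06233 — 4 statements merged into one kernel-verified Lean document; each statement's English description precedes it below -/
import Mathlib

section
/- The unreduced Burau representation of the loop braid group respects the mixed relation VIII: for each 1 ≤ i ≤ n−2, P_i B_{i+1} B_i = B_{i+1} B_i P_{i+1} as n×n matrices over A. -/
/-- The `n×n` unreduced Burau matrix `B_i` (`i` 1-based): it agrees with the identity
matrix except that its `2×2` submatrix in rows and columns `i, i+1` equals
`[[1−t, t], [1, 0]]`. -/
def burauM (A : Type*) [CommRing A] (n : ℕ) (t : A) (i : ℕ) :
    Matrix (Fin n) (Fin n) A :=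
  Matrix.of fun k l =>
    if (k : ℕ) + 1 = i ∧ (l : ℕ) + 1 = i then 1 - t
    else if (k : ℕ) + 1 = i ∧ (l : ℕ) = i then t
    else if (k : ℕ) = i ∧ (l : ℕ) + 1 = i then 1
    else if (k : ℕ) = i ∧ (l : ℕ) = i then 0
    else if k = l then 1 else 0

/-- The `n×n` permutation matrix `P_i` (`i` 1-based): it agrees with the identity
matrix except that its `2×2` submatrix in rows and columns `i, i+1` equals
`[[0, 1], [1, 0]]`. -/
def permM (A : Type*) [CommRing A] (n : ℕ) (i : ℕ) : Matrix (Fin n) (Fin n) A :=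
  Matrix.of fun k l =>
    if (k : ℕ) + 1 = i ∧ (l : ℕ) + 1 = i then 0
    else if (k : ℕ) + 1 = i ∧ (l : ℕ) = i then 1
    else if (k : ℕ) = i ∧ (l : ℕ) + 1 = i then 1
    else if (k : ℕ) = i ∧ (l : ℕ) = i then 0
    else if k = l then 1 else 0

def elemM (A : Type*) [CommRing A] (n : ℕ) (j : ℕ) (w x y z : A) :
    Matrix (Fin n) (Fin n) A :=
  Matrix.of fun k l =>
    if (k : ℕ) + 1 = j ∧ (l : ℕ) + 1 = j then w
    else if (k : ℕ) + 1 = j ∧ (l : ℕ) = j then x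
    else if (k : ℕ) = j ∧ (l : ℕ) + 1 = j then y
    else if (k : ℕ) = j ∧ (l : ℕ) = j then z
    else if (k : ℕ) = (l : ℕ) then 1 else 0

section
variable {A : Type*} [CommRing A] {n : ℕ}

lemma burau_eq_elemM (t : A) (j : ℕ) : burauM A n t j = elemM A n j (1-t) t 1 0 := by
  ext k l
  simp only [burauM, elemM, Matrix.of_apply, Fin.ext_iff]

lemma perm_eq_elemM (j : ℕ) : permM A n j = elemM A n j 0 1 1 0 := by
  ext k l
  simp only [permM, elemM, Matrix.of_apply, Fin.ext_iff]

lemma sum_three (a b c : Fin n) (f g h : Fin n → A) :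
    (∑ v : Fin n, ((if v = a then f v else 0) + (if v = b then g v else 0)
      + (if v = c then h v else 0))) = f a + g b + h c := by
  simp [Finset.sum_add_distrib, Finset.sum_ite_eq']

lemma elemM_mul (j : ℕ) (w x y z : A) (a b : Fin n) (ha : (a:ℕ)+1 = j) (hb : (b:ℕ) = j)
    (M : Matrix (Fin n) (Fin n) A) :
    elemM A n j w x y z * M = Matrix.of fun (k l : Fin n) =>
      if (k:ℕ) + 1 = j then w * M a l + x * M b l
      else if (k:ℕ) = j then y * M a l + z * M b l
      else M k l := by
  ext k l
  rw [Matrix.mul_apply]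
  have key : ∀ v : Fin n, elemM A n j w x y z k v * M v l
      = (if v = a then (if (k:ℕ)+1 = j then w else if (k:ℕ) = j then y else 0) * M v l else 0)
      + (if v = b then (if (k:ℕ)+1 = j then x else if (k:ℕ) = j then z else 0) * M v l else 0)
      + (if v = k then (if (k:ℕ)+1 = j then 0 else if (k:ℕ) = j then 0 else 1) * M v l else 0) := by
    intro v
    simp only [elemM, Matrix.of_apply, Fin.ext_iff]
    split_ifs <;> first | ring1 | omega | (exfalso; omega)
  rw [Finset.sum_congr rfl (fun v _ => key v), sum_three]
  simp only [Matrix.of_apply]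
  split_ifs <;> first | ring1 | omega | (exfalso; omega)

lemma mul_elemM (j : ℕ) (w x y z : A) (a b : Fin n) (ha : (a:ℕ)+1 = j) (hb : (b:ℕ) = j)
    (M : Matrix (Fin n) (Fin n) A) :
    M * elemM A n j w x y z = Matrix.of fun (k l : Fin n) =>
      if (l:ℕ) + 1 = j then M k a * w + M k b * y
      else if (l:ℕ) = j then M k a * x + M k b * z
      else M k l := by
  ext k l
  rw [Matrix.mul_apply]
  have key : ∀ v : Fin n, M k v * elemM A n j w x y z v l
      = (if v = a then M k v * (if (l:ℕ)+1 = j then w else if (l:ℕ) = j then x else 0) else 0)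
      + (if v = b then M k v * (if (l:ℕ)+1 = j then y else if (l:ℕ) = j then z else 0) else 0)
      + (if v = l then M k v * (if (l:ℕ)+1 = j then 0 else if (l:ℕ) = j then 0 else 1) else 0) := by
    intro v
    simp only [elemM, Matrix.of_apply, Fin.ext_iff]
    split_ifs <;> first | ring1 | omega | (exfalso; omega)
  rw [Finset.sum_congr rfl (fun v _ => key v), sum_three]
  simp only [Matrix.of_apply]
  split_ifs <;> first | ring1 | omega | (exfalso; omega)

end

lemma elemM_decomp {A : Type*} [CommRing A] {n : ℕ} (j : ℕ) (w x y z : A) (a b : Fin n)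
    (ha : (a:ℕ)+1 = j) (hb : (b:ℕ) = j) :
    elemM A n j w x y z = 1 + (w-1) • Matrix.single a a (1:A)
      + x • Matrix.single a b (1:A) + y • Matrix.single b a (1:A)
      + (z-1) • Matrix.single b b (1:A) := by
  ext k l
  simp only [elemM, Matrix.add_apply, Matrix.smul_apply, Matrix.one_apply,
    Matrix.single, Matrix.of_apply, smul_eq_mul, Fin.ext_iff]
  split_ifs <;> first | ring1 | omega | (exfalso; omega)

set_option maxHeartbeats 1000000

/-- The unreduced Burau representation of the loop braid group respects the mixed
relation VIII: for each `1 ≤ i ≤ n−2`, `P_i B_{i+1} B_i = B_{i+1} B_i P_{i+1}` as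
`n×n` matrices over `A`. -/
theorem statement12 (A : Type*) [CommRing A] (t : A) (n : ℕ) (hn : 3 ≤ n)
    (i : ℕ) (hi1 : 1 ≤ i) (hi2 : i ≤ n - 2) :
    permM A n i * burauM A n t (i + 1) * burauM A n t i =
      burauM A n t (i + 1) * burauM A n t i * permM A n (i + 1) := by
  have h1 : i - 1 < n := by omega
  have h2 : i < n := by omega
  have h3 : i + 1 < n := by omega
  set a : Fin n := ⟨i - 1, h1⟩ with haa
  set b : Fin n := ⟨i, h2⟩ with hbb
  set c : Fin n := ⟨i + 1, h3⟩ with hcc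
  have hab : a ≠ b := Fin.ne_of_val_ne (by simp only [haa, hbb]; omega)
  have hba : b ≠ a := Fin.ne_of_val_ne (by simp only [haa, hbb]; omega)
  have hac : a ≠ c := Fin.ne_of_val_ne (by simp only [haa, hcc]; omega)
  have hca : c ≠ a := Fin.ne_of_val_ne (by simp only [haa, hcc]; omega)
  have hbc : b ≠ c := Fin.ne_of_val_ne (by simp only [hbb, hcc]; omega)
  have hcb : c ≠ b := Fin.ne_of_val_ne (by simp only [hbb, hcc]; omega)
  rw [burau_eq_elemM t i, burau_eq_elemM t (i+1), perm_eq_elemM i, perm_eq_elemM (i+1),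
      elemM_decomp i (1-t) t 1 0 a b (by simp [haa] <;> omega) (by simp [hbb] <;> omega),
      elemM_decomp (i+1) (1-t) t 1 0 b c (by simp [hbb] <;> omega) (by simp [hcc] <;> omega),
      elemM_decomp i 0 1 1 0 a b (by simp [haa] <;> omega) (by simp [hbb] <;> omega),
      elemM_decomp (i+1) 0 1 1 0 b c (by simp [hbb] <;> omega) (by simp [hcc] <;> omega)]
  simp [mul_add, add_mul, smul_mul_assoc, mul_smul_comm, smul_smul,
    hab, hba, hac, hca, hbc, hcb]
  module
end

section
/- The twisted representation R̄ of the loop braid group respects the braid relation: for each 1 ≤ i ≤ n−2, N_i(a∘(τ_i∘τ_{i+1})) · N_{i+1}(a∘τ_i) · N_i(a) = N_{i+1}(a∘(τ_{i+1}∘τ_i)) · N_i(a∘τ_{i+1}) · N_{i+1}(a) as n×n matrices over A. -/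
/-- 1-based access to the tuple `a = (a_1, …, a_n)`: `aval n a j = a_j` for
`1 ≤ j ≤ n` (junk value `0` out of range). -/
def aval {A : Type*} [CommRing A] (n : ℕ) (a : Fin n → A) (j : ℕ) : A :=
  if h : j - 1 < n then a ⟨j - 1, h⟩ else 0

/-- The twisted Burau matrix `M_i(a) = R(σ_i)` (`i` 1-based): it agrees with the
identity matrix except that its `2×2` submatrix in rows and columns `i, i+1` equals
`[[1−a_{i+1}, a_i], [1, 0]]`. -/
def twistM (A : Type*) [CommRing A] (n : ℕ) (a : Fin n → A) (i : ℕ) :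
    Matrix (Fin n) (Fin n) A :=
  Matrix.of fun k l =>
    if (k : ℕ) + 1 = i ∧ (l : ℕ) + 1 = i then 1 - aval n a (i + 1)
    else if (k : ℕ) + 1 = i ∧ (l : ℕ) = i then aval n a i
    else if (k : ℕ) = i ∧ (l : ℕ) + 1 = i then 1
    else if (k : ℕ) = i ∧ (l : ℕ) = i then 0
    else if k = l then 1 else 0

/-- The matrix `N_i(a) = R̄(σ_i)` (`i` 1-based): it agrees with the identity matrix
except that its `2×2` submatrix in rows and columns `i, i+1` equals
`[[0, a_i], [1, 1−a_i]]`. -/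
def twistN (A : Type*) [CommRing A] (n : ℕ) (a : Fin n → A) (i : ℕ) :
    Matrix (Fin n) (Fin n) A :=
  Matrix.of fun k l =>
    if (k : ℕ) + 1 = i ∧ (l : ℕ) + 1 = i then 0
    else if (k : ℕ) + 1 = i ∧ (l : ℕ) = i then aval n a i
    else if (k : ℕ) = i ∧ (l : ℕ) + 1 = i then 1
    else if (k : ℕ) = i ∧ (l : ℕ) = i then 1 - aval n a i
    else if k = l then 1 else 0

/-- The transposition `τ_j` of `{1, …, n}` swapping `j` and `j+1` (1-based), as a
permutation of `Fin n` (junk value `1` out of range). -/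
def tau (n j : ℕ) : Equiv.Perm (Fin n) :=
  if h : 1 ≤ j ∧ j < n then Equiv.swap ⟨j - 1, by omega⟩ ⟨j, h.2⟩ else 1

lemma twistN_mul_apply (A : Type*) [CommRing A] (n : ℕ) (a : Fin n → A) (i : ℕ)
    (hi : 1 ≤ i) (hin : i < n) (X : Matrix (Fin n) (Fin n) A) (k l : Fin n) :
    (twistN A n a i * X) k l =
      if (k : ℕ) + 1 = i then aval n a i * X ⟨i, hin⟩ l
      else if (k : ℕ) = i then
        X ⟨i - 1, by omega⟩ l + (1 - aval n a i) * X ⟨i, hin⟩ l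
      else X k l := by
  rw [Matrix.mul_apply]
  by_cases h1 : (k : ℕ) + 1 = i
  · rw [if_pos h1]
    rw [Finset.sum_eq_single (⟨i, hin⟩ : Fin n)]
    · have : twistN A n a i k ⟨i, hin⟩ = aval n a i := by
        simp only [twistN, Matrix.of_apply, Fin.ext_iff, Fin.val_mk, and_true, true_and, and_false, false_and]
        split_ifs <;> first | rfl | omega
      rw [this]
    · intro m _ hm
      have hm' : (m : ℕ) ≠ i := fun h => hm (Fin.ext h)
      have : twistN A n a i k m = 0 := by
        simp only [twistN, Matrix.of_apply, Fin.ext_iff, Fin.val_mk, and_true, true_and, and_false, false_and]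
        split_ifs <;> first | rfl | omega
      rw [this, zero_mul]
    · intro h; exact absurd (Finset.mem_univ _) h
  · rw [if_neg h1]
    by_cases h2 : (k : ℕ) = i
    · rw [if_pos h2]
      have key : ∀ m : Fin n, twistN A n a i k m * X m l =
          (if m = (⟨i - 1, by omega⟩ : Fin n) then X m l else 0) +
          (if m = (⟨i, hin⟩ : Fin n) then (1 - aval n a i) * X m l else 0) := by
        intro m
        simp only [twistN, Matrix.of_apply, Fin.ext_iff, Fin.val_mk, and_true, true_and, and_false, false_and]
        split_ifs <;> first | omega | ring
      rw [Finset.sum_congr rfl (fun m _ => key m), Finset.sum_add_distrib]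
      rw [Finset.sum_ite_eq' Finset.univ, Finset.sum_ite_eq' Finset.univ]
      simp only [Finset.mem_univ, if_true]
    · rw [if_neg h2]
      have key : ∀ m : Fin n, twistN A n a i k m * X m l =
          (if m = k then X m l else 0) := by
        intro m
        simp only [twistN, Matrix.of_apply, Fin.ext_iff, Fin.val_mk, and_true, true_and, and_false, false_and]
        split_ifs <;> first | omega | ring
      rw [Finset.sum_congr rfl (fun m _ => key m), Finset.sum_ite_eq' Finset.univ]
      simp only [Finset.mem_univ, if_true]



lemma aval_const {A : Type*} [CommRing A] {n j : ℕ} (x : A) (h : j - 1 < n) :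
    aval n (fun _ => x) j = x := by rw [aval, dif_pos h]

set_option maxHeartbeats 1600000 in
lemma braidN (A : Type*) [CommRing A] (n : ℕ) (x y : A) (i : ℕ)
    (h1 : 1 ≤ i) (h2 : i + 1 < n) :
    twistN A n (fun _ => x) i * twistN A n (fun _ => y) (i + 1) *
        twistN A n (fun _ => y) i =
      twistN A n (fun _ => y) (i + 1) * twistN A n (fun _ => y) i *
        twistN A n (fun _ => x) (i + 1) := by
  have hin : i < n := by omega
  ext k l
  rw [Matrix.mul_assoc, Matrix.mul_assoc]
  simp only [twistN_mul_apply A n (fun _ => x) i h1 hin,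
    twistN_mul_apply A n (fun _ => y) (i + 1) (by omega) h2,
    twistN_mul_apply A n (fun _ => y) i h1 hin,
    twistN_mul_apply A n (fun _ => x) (i + 1) (by omega) h2,
    Fin.val_mk, Nat.add_sub_cancel]
  simp only [twistN, Matrix.of_apply, Fin.ext_iff, Fin.val_mk, Nat.add_sub_cancel,
    aval_const x (show i - 1 < n from by omega),
    aval_const y (show i - 1 < n from by omega),
    aval_const x (show (i + 1) - 1 < n from by omega),
    aval_const y (show (i + 1) - 1 < n from by omega),
    show i - 1 + 1 = i from by omega,
    show ¬(i - 1 = i) from by omega,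
    show ¬(i - 1 = i + 1) from by omega,
    show ¬(i + 1 = i) from by omega,
    show ¬(i = i + 1) from by omega,
    show ¬(i + 1 + 1 = i) from by omega,
    show ¬(i + 1 + 1 = i + 1) from by omega,
    eq_self_iff_true, if_true, if_false,
    and_true, true_and, and_false, false_and, not_false_iff]
  split_ifs <;> first | omega | ring

lemma twistN_congr {A : Type*} [CommRing A] {n : ℕ} {a a' : Fin n → A} {i : ℕ}
    (h : aval n a i = aval n a' i) : twistN A n a i = twistN A n a' i := by
  unfold twistN; rw [h]


/-- The twisted representation `R̄` of the loop braid group respects the braid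
relation: for each `1 ≤ i ≤ n−2`,
`N_i(a∘(τ_i∘τ_{i+1})) · N_{i+1}(a∘τ_i) · N_i(a) = N_{i+1}(a∘(τ_{i+1}∘τ_i)) · N_i(a∘τ_{i+1}) · N_{i+1}(a)`
as `n×n` matrices over `A`. -/
theorem statement15 (A : Type*) [CommRing A] (n : ℕ) (hn : 3 ≤ n) (a : Fin n → A)
    (i : ℕ) (hi1 : 1 ≤ i) (hi2 : i ≤ n - 2) :
    twistN A n (a ∘ (⇑(tau n i) ∘ ⇑(tau n (i + 1)))) i *
        twistN A n (a ∘ ⇑(tau n i)) (i + 1) * twistN A n a i =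
      twistN A n (a ∘ (⇑(tau n (i + 1)) ∘ ⇑(tau n i))) (i + 1) *
        twistN A n (a ∘ ⇑(tau n (i + 1))) i * twistN A n a (i + 1) := by
  have hin : i < n := by omega
  have h2 : i + 1 < n := by omega
  have him : i - 1 < n := by omega
  have h2' : i + 1 - 1 < n := by omega
  have htaui : tau n i = Equiv.swap ⟨i - 1, him⟩ ⟨i, hin⟩ := by
    rw [tau, dif_pos ⟨hi1, hin⟩]
  have htaui1 : tau n (i + 1) = Equiv.swap ⟨i, hin⟩ ⟨i + 1, h2⟩ := by
    rw [tau, dif_pos ⟨by omega, h2⟩]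
    congr 1 <;> exact Fin.ext (by simp)
  have f1 : tau n i ⟨i - 1, him⟩ = ⟨i, hin⟩ := by
    rw [htaui]; exact Equiv.swap_apply_left _ _
  have f2 : tau n i ⟨i, hin⟩ = ⟨i - 1, him⟩ := by
    rw [htaui]; exact Equiv.swap_apply_right _ _
  have f3 : tau n (i + 1) ⟨i - 1, him⟩ = ⟨i - 1, him⟩ := by
    rw [htaui1]
    exact Equiv.swap_apply_of_ne_of_ne
      (by simp only [ne_eq, Fin.mk.injEq]; omega)
      (by simp only [ne_eq, Fin.mk.injEq]; omega)
  have hA : aval n (a ∘ (⇑(tau n i) ∘ ⇑(tau n (i + 1)))) i = aval n a (i + 1) := by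
    simp only [aval]
    rw [dif_pos him, dif_pos h2']
    show a (tau n i (tau n (i + 1) ⟨i - 1, him⟩)) = a ⟨i + 1 - 1, h2'⟩
    rw [f3, f1]
    exact congrArg a (Fin.ext (by simp))
  have hB : aval n (a ∘ ⇑(tau n i)) (i + 1) = aval n a i := by
    simp only [aval]
    rw [dif_pos h2', dif_pos him]
    show a (tau n i ⟨i, hin⟩) = a ⟨i - 1, him⟩
    rw [f2]
  have hC : aval n (a ∘ (⇑(tau n (i + 1)) ∘ ⇑(tau n i))) (i + 1) = aval n a i := by
    simp only [aval]
    rw [dif_pos h2', dif_pos him]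
    show a (tau n (i + 1) (tau n i ⟨i, hin⟩)) = a ⟨i - 1, him⟩
    rw [f2, f3]
  have hD : aval n (a ∘ ⇑(tau n (i + 1))) i = aval n a i := by
    simp only [aval]
    rw [dif_pos him, dif_pos him]
    show a (tau n (i + 1) ⟨i - 1, him⟩) = a ⟨i - 1, him⟩
    rw [f3]
  rw [twistN_congr (a' := fun _ => aval n a (i + 1))
        (hA.trans (aval_const _ him).symm),
      twistN_congr (a := a ∘ ⇑(tau n i)) (a' := fun _ => aval n a i)
        (hB.trans (aval_const _ h2').symm),
      twistN_congr (a := a) (a' := fun _ => aval n a i) (i := i)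
        ((aval_const _ him).symm),
      twistN_congr (a := a ∘ (⇑(tau n (i + 1)) ∘ ⇑(tau n i)))
        (a' := fun _ => aval n a i) (hC.trans (aval_const _ h2').symm),
      twistN_congr (a := a ∘ ⇑(tau n (i + 1))) (a' := fun _ => aval n a i)
        (hD.trans (aval_const _ him).symm),
      twistN_congr (a := a) (a' := fun _ => aval n a (i + 1)) (i := i + 1)
        ((aval_const _ h2').symm)]
  exact braidN A n (aval n a (i + 1)) (aval n a i) i hi1 h2
end

section
/- The twisted representation R of the loop braid group respects the mixed relations VII and VIII: for each 1 ≤ i ≤ n−2, M_i(a∘(τ_i∘τ_{i+1})) · P_{i+1} · P_i = P_{i+1} · P_i · M_{i+1}(a) and P_i · M_{i+1}(a∘τ_i) · M_i(a) = M_{i+1}(a∘(τ_{i+1}∘τ_i)) · M_i(a∘τ_{i+1}) · P_{i+1} as n×n matrices over A. -/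
/-
With `P, Q, R` the 0-based positions of `i, i+1, i+2`, every matrix in the two relations
is the identity plus a combination of the matrix units `E_{xy}`, `x, y ∈ {P, Q, R}`, and
reindexing by `τ_i`, `τ_{i+1}` only permutes the coefficients `a_P, a_Q, a_R`. Expanding
the products with `E_{xy} E_{zw} = δ_{yz} E_{xw}` turns both relations into identities
between linear combinations of matrix units.
-/

open Matrix

section

variable {A : Type*} [CommRing A] {n : ℕ}

lemma aval_of_val_succ_eq (b : Fin n → A) {j : ℕ} {P : Fin n} (hP : (P : ℕ) + 1 = j) :
    aval n b j = b P := by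
  subst hP
  simp [aval]

lemma tau_of_val_succ_eq {j : ℕ} {P Q : Fin n} (hP : (P : ℕ) + 1 = j) (hQ : (Q : ℕ) = j) :
    tau n j = Equiv.swap P Q := by
  have hj : 1 ≤ j ∧ j < n := ⟨by omega, hQ ▸ Q.isLt⟩
  rw [tau, dif_pos hj]
  congr 1 <;> ext <;> simp only <;> omega

lemma twistM_eq_single (b : Fin n → A) {j : ℕ} {P Q : Fin n}
    (hP : (P : ℕ) + 1 = j) (hQ : (Q : ℕ) = j) :
    twistM A n b j =
      1 - b Q • single P P 1 + b P • single P Q 1 + single Q P 1 - single Q Q 1 := by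
  ext k l
  simp only [twistM, aval_of_val_succ_eq b hP, aval_of_val_succ_eq b (j := j + 1) (P := Q)
    (by omega), of_apply, Matrix.add_apply, Matrix.sub_apply, Matrix.smul_apply, one_apply,
    single, Fin.ext_iff, smul_eq_mul]
  split_ifs <;> first | omega | ring

lemma permM_eq_single {j : ℕ} {P Q : Fin n} (hP : (P : ℕ) + 1 = j) (hQ : (Q : ℕ) = j) :
    permM A n j = 1 - single P P 1 + single P Q 1 + single Q P 1 - single Q Q 1 := by
  ext k l
  simp only [permM, of_apply, Matrix.add_apply, Matrix.sub_apply, one_apply, single,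
    Fin.ext_iff]
  split_ifs <;> first | omega | ring

variable {i : ℕ} {P Q R : Fin n}

lemma twistM_mul_permM_mul_permM (b : Fin n → A)
    (hP : (P : ℕ) + 1 = i) (hQ : (Q : ℕ) = i) (hR : (R : ℕ) = i + 1) :
    twistM A n (b ∘ (tau n i ∘ tau n (i + 1))) i * permM A n (i + 1) * permM A n i =
      permM A n (i + 1) * permM A n i * twistM A n b (i + 1) := by
  have hPQ : P ≠ Q := by omega
  have hPR : P ≠ R := by omega
  have hQR : Q ≠ R := by omega
  have hQ' : (Q : ℕ) + 1 = i + 1 := by omega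
  rw [twistM_eq_single _ hP hQ, twistM_eq_single b hQ' hR, permM_eq_single hP hQ,
    permM_eq_single hQ' hR, tau_of_val_succ_eq hP hQ, tau_of_val_succ_eq hQ' hR]
  simp only [Function.comp_apply, Equiv.swap_apply_left, Equiv.swap_apply_of_ne_of_ne, hPQ,
    hPR, hPR.symm, hQR.symm, ne_eq, not_false_eq_true]
  simp only [sub_mul, mul_sub, add_mul, mul_add, Matrix.smul_mul, Matrix.mul_smul, one_mul,
    mul_one, zero_mul, single_mul_single_same, single_mul_single_of_ne, hPQ, hPR, hQR,
    hPQ.symm, hPR.symm, hQR.symm, ne_eq, not_false_eq_true, smul_zero]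
  module

lemma permM_mul_twistM_mul_twistM (b : Fin n → A)
    (hP : (P : ℕ) + 1 = i) (hQ : (Q : ℕ) = i) (hR : (R : ℕ) = i + 1) :
    permM A n i * twistM A n (b ∘ tau n i) (i + 1) * twistM A n b i =
      twistM A n (b ∘ (tau n (i + 1) ∘ tau n i)) (i + 1) * twistM A n (b ∘ tau n (i + 1)) i *
        permM A n (i + 1) := by
  have hPQ : P ≠ Q := by omega
  have hPR : P ≠ R := by omega
  have hQR : Q ≠ R := by omega
  have hQ' : (Q : ℕ) + 1 = i + 1 := by omega
  rw [twistM_eq_single _ hP hQ, twistM_eq_single _ hQ' hR, twistM_eq_single _ hP hQ,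
    twistM_eq_single _ hQ' hR, permM_eq_single hP hQ, permM_eq_single hQ' hR,
    tau_of_val_succ_eq hP hQ, tau_of_val_succ_eq hQ' hR]
  simp only [Function.comp_apply, Equiv.swap_apply_left, Equiv.swap_apply_right,
    Equiv.swap_apply_of_ne_of_ne, hPQ, hPR, hPR.symm, hQR.symm, ne_eq, not_false_eq_true]
  simp only [sub_mul, mul_sub, add_mul, mul_add, Matrix.smul_mul, Matrix.mul_smul, one_mul,
    mul_one, zero_mul, single_mul_single_same, single_mul_single_of_ne, hPQ, hPR, hQR,
    hPQ.symm, hPR.symm, hQR.symm, ne_eq, not_false_eq_true, smul_zero]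
  module

end

theorem statement16_general (A : Type*) [CommRing A] (n : ℕ) (a : Fin n → A)
    (i : ℕ) (hi1 : 1 ≤ i) (hi2 : i ≤ n - 2) :
    (twistM A n (a ∘ (⇑(tau n i) ∘ ⇑(tau n (i + 1)))) i * permM A n (i + 1) *
        permM A n i =
      permM A n (i + 1) * permM A n i * twistM A n a (i + 1)) ∧
    (permM A n i * twistM A n (a ∘ ⇑(tau n i)) (i + 1) * twistM A n a i =
      twistM A n (a ∘ (⇑(tau n (i + 1)) ∘ ⇑(tau n i))) (i + 1) *
        twistM A n (a ∘ ⇑(tau n (i + 1))) i * permM A n (i + 1)) := by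
  let P : Fin n := ⟨i - 1, by omega⟩
  let Q : Fin n := ⟨i, by omega⟩
  let R : Fin n := ⟨i + 1, by omega⟩
  have hP : (P : ℕ) + 1 = i := Nat.sub_add_cancel hi1
  exact ⟨twistM_mul_permM_mul_permM (Q := Q) (R := R) a hP rfl rfl,
    permM_mul_twistM_mul_twistM (Q := Q) (R := R) a hP rfl rfl⟩

/-- The twisted representation `R` of the loop braid group respects the mixed relations
VII and VIII: for each `1 ≤ i ≤ n−2`,
`M_i(a∘(τ_i∘τ_{i+1})) · P_{i+1} · P_i = P_{i+1} · P_i · M_{i+1}(a)` and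
`P_i · M_{i+1}(a∘τ_i) · M_i(a) = M_{i+1}(a∘(τ_{i+1}∘τ_i)) · M_i(a∘τ_{i+1}) · P_{i+1}`
as `n×n` matrices over `A`. -/
theorem statement16 (A : Type*) [CommRing A] (n : ℕ) (hn : 3 ≤ n) (a : Fin n → A)
    (i : ℕ) (hi1 : 1 ≤ i) (hi2 : i ≤ n - 2) :
    (twistM A n (a ∘ (⇑(tau n i) ∘ ⇑(tau n (i + 1)))) i * permM A n (i + 1) *
        permM A n i =
      permM A n (i + 1) * permM A n i * twistM A n a (i + 1)) ∧
    (permM A n i * twistM A n (a ∘ ⇑(tau n i)) (i + 1) * twistM A n a i =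
      twistM A n (a ∘ (⇑(tau n (i + 1)) ∘ ⇑(tau n i))) (i + 1) *
        twistM A n (a ∘ ⇑(tau n (i + 1))) i * permM A n (i + 1)) :=
  statement16_general A n a i hi1 hi2
end

section
/- The twisted representation R̄ of the loop braid group respects the mixed relations VII and VIII: for each 1 ≤ i ≤ n−2, N_i(a∘(τ_i∘τ_{i+1})) · P_{i+1} · P_i = P_{i+1} · P_i · N_{i+1}(a) and P_i · N_{i+1}(a∘τ_i) · N_i(a) = N_{i+1}(a∘(τ_{i+1}∘τ_i)) · N_i(a∘τ_{i+1}) · P_{i+1} as n×n matrices over A. -/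
/-! Away from rows and columns `i, i+1`, both `N_i(a)` and `P_i` are the identity, and
`P_i` is `N_i` with `a_i` replaced by `1`. Written as combinations of matrix units, each
relation becomes an identity among three such block matrices on three distinct indices,
which holds after expanding with `E_{pq} E_{rs} = δ_{qr} E_{ps}`. -/

section TwistBlock

open Matrix

variable {A : Type*} [CommRing A] {ι : Type*} [Fintype ι] [DecidableEq ι]

/-- With 0-based indices, `N_i(a) = twistBlock (i-1) i a_i` and `P_i = twistBlock (i-1) i 1`. -/
def twistBlock (p q : ι) (y : A) : Matrix ι ι A :=
  1 - single p p 1 + y • single p q 1 + single q p 1 - y • single q q 1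

theorem twistBlock_mul_twistBlock_one_mul_twistBlock_one {p q r : ι}
    (hpq : p ≠ q) (hqr : q ≠ r) (hpr : p ≠ r) (y : A) :
    twistBlock p q y * twistBlock q r 1 * twistBlock p q 1 =
      twistBlock q r 1 * twistBlock p q 1 * twistBlock q r y := by
  simp only [twistBlock, sub_mul, mul_sub, add_mul, mul_add, Matrix.smul_mul, Matrix.mul_smul,
    one_mul, mul_one, one_smul, single_mul_single_same, single_mul_single_of_ne, hpq, hqr, hpr,
    hpq.symm, hqr.symm, hpr.symm, ne_eq, not_false_eq_true, smul_zero]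
  module

theorem twistBlock_one_mul_twistBlock_mul_twistBlock {p q r : ι}
    (hpq : p ≠ q) (hqr : q ≠ r) (hpr : p ≠ r) (x : A) :
    twistBlock p q 1 * twistBlock q r x * twistBlock p q x =
      twistBlock q r x * twistBlock p q x * twistBlock q r 1 := by
  simp only [twistBlock, sub_mul, mul_sub, add_mul, mul_add, Matrix.smul_mul, Matrix.mul_smul,
    one_mul, mul_one, one_smul, single_mul_single_same, single_mul_single_of_ne, hpq, hqr, hpr,
    hpq.symm, hqr.symm, hpr.symm, ne_eq, not_false_eq_true, smul_zero]
  module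

end TwistBlock

section OneBased

variable {A : Type*} [CommRing A] {n k : ℕ}

theorem aval_succ (a : Fin n → A) (hk : k < n) : aval n a (k + 1) = a ⟨k, hk⟩ :=
  dif_pos hk

theorem tau_succ (hk : k + 1 < n) :
    tau n (k + 1) = Equiv.swap ⟨k, by omega⟩ ⟨k + 1, hk⟩ :=
  dif_pos ⟨le_add_self, hk⟩

theorem twistN_succ_eq_twistBlock (a : Fin n → A) (hk : k + 1 < n) :
    twistN A n a (k + 1) = twistBlock ⟨k, by omega⟩ ⟨k + 1, hk⟩ (a ⟨k, by omega⟩) := by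
  ext i j
  simp only [twistN, twistBlock, aval_succ a (by omega : k < n), Matrix.of_apply,
    Matrix.sub_apply, Matrix.add_apply, Matrix.one_apply, Matrix.smul_apply, Matrix.single,
    smul_eq_mul, Fin.ext_iff]
  split_ifs <;> first | (exfalso; omega) | ring1

theorem permM_succ_eq_twistBlock (hk : k + 1 < n) :
    permM A n (k + 1) = twistBlock ⟨k, by omega⟩ ⟨k + 1, hk⟩ 1 := by
  ext i j
  simp only [permM, twistBlock, Matrix.of_apply, Matrix.sub_apply, Matrix.add_apply,
    Matrix.one_apply, Matrix.smul_apply, Matrix.single, smul_eq_mul, Fin.ext_iff]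
  split_ifs <;> first | (exfalso; omega) | ring1

end OneBased

theorem statement17_general (A : Type*) [CommRing A] (n : ℕ) (a : Fin n → A)
    (i : ℕ) (hi1 : 1 ≤ i) (hi2 : i ≤ n - 2) :
    (twistN A n (a ∘ (⇑(tau n i) ∘ ⇑(tau n (i + 1)))) i * permM A n (i + 1) *
        permM A n i =
      permM A n (i + 1) * permM A n i * twistN A n a (i + 1)) ∧
    (permM A n i * twistN A n (a ∘ ⇑(tau n i)) (i + 1) * twistN A n a i =
      twistN A n (a ∘ (⇑(tau n (i + 1)) ∘ ⇑(tau n i))) (i + 1) *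
        twistN A n (a ∘ ⇑(tau n (i + 1))) i * permM A n (i + 1)) := by
  obtain ⟨k, rfl⟩ : ∃ k, i = k + 1 := ⟨i - 1, by omega⟩
  have hk : k + 1 + 1 < n := by omega
  let p : Fin n := ⟨k, by omega⟩
  let q : Fin n := ⟨k + 1, by omega⟩
  let r : Fin n := ⟨k + 1 + 1, hk⟩
  have hpq : p ≠ q := by simp only [p, q, ne_eq, Fin.mk.injEq]; omega
  have hqr : q ≠ r := by simp only [q, r, ne_eq, Fin.mk.injEq]; omega
  have hpr : p ≠ r := by simp only [p, r, ne_eq, Fin.mk.injEq]; omega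
  have hNp (b : Fin n → A) : twistN A n b (k + 1) = twistBlock p q (b p) :=
    twistN_succ_eq_twistBlock b _
  have hNq (b : Fin n → A) : twistN A n b (k + 1 + 1) = twistBlock q r (b q) :=
    twistN_succ_eq_twistBlock b hk
  have hPp : permM A n (k + 1) = twistBlock p q 1 := permM_succ_eq_twistBlock _
  have hPq : permM A n (k + 1 + 1) = twistBlock q r 1 := permM_succ_eq_twistBlock hk
  have hτp : tau n (k + 1) = Equiv.swap p q := tau_succ _
  have hτq : tau n (k + 1 + 1) = Equiv.swap q r := tau_succ hk
  simp only [hNp, hNq, hPp, hPq, hτp, hτq, Function.comp_apply, Equiv.swap_apply_left,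
    Equiv.swap_apply_right, Equiv.swap_apply_of_ne_of_ne hpq hpr]
  exact ⟨twistBlock_mul_twistBlock_one_mul_twistBlock_one hpq hqr hpr (a q),
    twistBlock_one_mul_twistBlock_mul_twistBlock hpq hqr hpr (a p)⟩

/-- The twisted representation `R̄` of the loop braid group respects the mixed
relations VII and VIII: for each `1 ≤ i ≤ n−2`,
`N_i(a∘(τ_i∘τ_{i+1})) · P_{i+1} · P_i = P_{i+1} · P_i · N_{i+1}(a)` and
`P_i · N_{i+1}(a∘τ_i) · N_i(a) = N_{i+1}(a∘(τ_{i+1}∘τ_i)) · N_i(a∘τ_{i+1}) · P_{i+1}`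
as `n×n` matrices over `A`. -/
theorem statement17 (A : Type*) [CommRing A] (n : ℕ) (hn : 3 ≤ n) (a : Fin n → A)
    (i : ℕ) (hi1 : 1 ≤ i) (hi2 : i ≤ n - 2) :
    (twistN A n (a ∘ (⇑(tau n i) ∘ ⇑(tau n (i + 1)))) i * permM A n (i + 1) *
        permM A n i =
      permM A n (i + 1) * permM A n i * twistN A n a (i + 1)) ∧
    (permM A n i * twistN A n (a ∘ ⇑(tau n i)) (i + 1) * twistN A n a i =
      twistN A n (a ∘ (⇑(tau n (i + 1)) ∘ ⇑(tau n i))) (i + 1) *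
        twistN A n (a ∘ ⇑(tau n (i + 1))) i * permM A n (i + 1)) :=
  statement17_general A n a i hi1 hi2
end
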